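/- arXiv:2210.00178 — 5 statements merged into one kernel-verified Lean document; each statement's English description precedes it below -/
import Mathlib

section
/- If α⁰ ≼ x ≼ β⁰ componentwise, then the IBP pre-activation bounds computed recursively by α̂ˡ = Wˡβˡ⁻¹ + bˡ + [Wˡ]₊(αˡ⁻¹ − βˡ⁻¹), β̂ˡ = Wˡβˡ⁻¹ + bˡ + [−Wˡ]₊(βˡ⁻¹ − αˡ⁻¹), αˡ = gˡ(α̂ˡ), βˡ = gˡ(β̂ˡ) satisfy, for every layer ℓ, α̂ˡ ≼ Wˡ·f^{1:ℓ−1}(x) + bˡ ≼ β̂ˡ, where f^{1:ℓ−1} is the composition of the first ℓ−1 layers fˢ(x) = gˢ(Wˢx + bˢ). -/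
lemma ibp_key (w a y β : ℝ) (h1 : a ≤ y) (h2 : y ≤ β) :
    w * β + max w 0 * (a - β) ≤ w * y ∧ w * y ≤ w * β + max (-w) 0 * (β - a) := by
  rcases le_or_gt 0 w with h | h
  · rw [max_eq_left h, max_eq_right (by linarith)]
    constructor <;> nlinarith
  · rw [max_eq_right h.le, max_eq_left (by linarith)]
    constructor <;> nlinarith

/-- Correctness of IBP pre-activation bounds. If `α⁰ ≼ x ≼ β⁰`,
then for every layer `ℓ`, `α̂ˡ ≼ Wˡ·f^{1:ℓ−1}(x) + bˡ ≼ β̂ˡ`, where the bounds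
follow the IBP recursion and `f^{1:ℓ}` is the composition of the first `ℓ` layers
`fˢ(x) = gˢ(Wˢx + bˢ)` with monotone componentwise activations. -/
theorem stmt3 (d : ℕ → ℕ)
    (W : ∀ ℓ : ℕ, Matrix (Fin (d (ℓ + 1))) (Fin (d ℓ)) ℝ)
    (b : ∀ ℓ : ℕ, Fin (d (ℓ + 1)) → ℝ)
    (g : ℕ → ℝ → ℝ) (hg : ∀ ℓ, Monotone (g ℓ))
    (α₀ β₀ : Fin (d 0) → ℝ)
    (αv βv : ∀ ℓ : ℕ, Fin (d ℓ) → ℝ)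
    (αhat βhat : ∀ ℓ : ℕ, Fin (d (ℓ + 1)) → ℝ)
    (f : ∀ ℓ : ℕ, (Fin (d 0) → ℝ) → Fin (d ℓ) → ℝ)
    (hα0 : αv 0 = α₀) (hβ0 : βv 0 = β₀)
    (hαhat : ∀ ℓ, αhat ℓ = (W ℓ).mulVec (βv ℓ) + b ℓ
        + (Matrix.of fun i j => max (W ℓ i j) 0).mulVec (αv ℓ - βv ℓ))
    (hβhat : ∀ ℓ, βhat ℓ = (W ℓ).mulVec (βv ℓ) + b ℓ
        + (Matrix.of fun i j => max (-(W ℓ i j)) 0).mulVec (βv ℓ - αv ℓ))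
    (hαs : ∀ ℓ, αv (ℓ + 1) = fun i => g ℓ (αhat ℓ i))
    (hβs : ∀ ℓ, βv (ℓ + 1) = fun i => g ℓ (βhat ℓ i))
    (hf0 : ∀ x, f 0 x = x)
    (hfs : ∀ ℓ x, f (ℓ + 1) x = fun i => g ℓ (((W ℓ).mulVec (f ℓ x) + b ℓ) i))
    (x : Fin (d 0) → ℝ) (hx : ∀ j, α₀ j ≤ x j ∧ x j ≤ β₀ j) :
    ∀ ℓ, ∀ i, αhat ℓ i ≤ ((W ℓ).mulVec (f ℓ x) + b ℓ) i
        ∧ ((W ℓ).mulVec (f ℓ x) + b ℓ) i ≤ βhat ℓ i := by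
  have pre : ∀ ℓ, (∀ j, αv ℓ j ≤ f ℓ x j ∧ f ℓ x j ≤ βv ℓ j) →
      ∀ i, αhat ℓ i ≤ ((W ℓ).mulVec (f ℓ x) + b ℓ) i
        ∧ ((W ℓ).mulVec (f ℓ x) + b ℓ) i ≤ βhat ℓ i := by
    intro ℓ h i
    rw [hαhat, hβhat]
    simp only [Pi.add_apply, Pi.sub_apply, Matrix.mulVec, dotProduct,
      Matrix.of_apply]
    have h1 : ∀ j ∈ Finset.univ, W ℓ i j * βv ℓ j + max (W ℓ i j) 0 * (αv ℓ j - βv ℓ j)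
        ≤ W ℓ i j * f ℓ x j :=
      fun j _ => (ibp_key _ _ _ _ (h j).1 (h j).2).1
    have h2 : ∀ j ∈ Finset.univ, W ℓ i j * f ℓ x j
        ≤ W ℓ i j * βv ℓ j + max (-(W ℓ i j)) 0 * (βv ℓ j - αv ℓ j) :=
      fun j _ => (ibp_key _ _ _ _ (h j).1 (h j).2).2
    have H1 := Finset.sum_le_sum h1
    have H2 := Finset.sum_le_sum h2
    rw [Finset.sum_add_distrib] at H1 H2
    constructor <;> linarith
  have main : ∀ ℓ, ∀ j, αv ℓ j ≤ f ℓ x j ∧ f ℓ x j ≤ βv ℓ j := by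
    intro ℓ
    induction ℓ with
    | zero => intro j; rw [hf0, hα0, hβ0]; exact hx j
    | succ n ih =>
      intro j
      rw [hαs, hβs, hfs]
      exact ⟨hg n (pre n ih j).1, hg n (pre n ih j).2⟩
  exact fun ℓ => pre ℓ (main ℓ)
end

section
/- Under parallelogram relaxation (D_Lˢ = D_Uˢ = Dˢ for all s), the gap between the upper and lower multi-layer linear approximation functions is constant in x and equals T_U^{ℓ−k:ℓ}(x) − T_L^{ℓ−k:ℓ}(x) = Σ_{s=0}^{k−1} |W^{ℓ−s:ℓ}| (b_U^{ℓ−s−1} − b_L^{ℓ−s−1}), where |W^{ℓ−s:ℓ}| denotes entrywise absolute value of the accumulated slope matrix. -/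
/-- Under parallelogram relaxation (`D_L = D_U = D` at every layer),
the gap between upper and lower multi-layer linear approximation functions is
constant in `x` and equals `Σ_{s=0}^{k−1} |W^{ℓ−s:ℓ}| (b_U^{ℓ−s−1} − b_L^{ℓ−s−1})`. -/
theorem stmt6 (d k : ℕ)
    (W0 : Matrix (Fin d) (Fin d) ℝ) (b0 : Fin d → ℝ)
    (Wmat D : ℕ → Matrix (Fin d) (Fin d) ℝ)
    (hdiag : ∀ s, (D s).IsDiag)
    (bvec offL offU : ℕ → Fin d → ℝ)
    (Wacc : ℕ → Matrix (Fin d) (Fin d) ℝ) (bL bU : ℕ → Fin d → ℝ)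
    (hW0 : Wacc 0 = W0) (hbL0 : bL 0 = b0) (hbU0 : bU 0 = b0)
    (hWs : ∀ s, Wacc (s + 1) = (Wacc s * D s) * Wmat s)
    (hbLs : ∀ s, bL (s + 1) = (Wacc s * D s).mulVec (bvec s)
        + (Matrix.of fun i j => min (Wacc s i j) 0).mulVec (offU s)
        + (Matrix.of fun i j => max (Wacc s i j) 0).mulVec (offL s) + bL s)
    (hbUs : ∀ s, bU (s + 1) = (Wacc s * D s).mulVec (bvec s)
        + (Matrix.of fun i j => max (Wacc s i j) 0).mulVec (offU s)
        + (Matrix.of fun i j => min (Wacc s i j) 0).mulVec (offL s) + bU s) :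
    ∀ x : Fin d → ℝ,
      ((Wacc k).mulVec x + bU k) - ((Wacc k).mulVec x + bL k)
        = ∑ s ∈ Finset.range k,
            (Matrix.of fun i j => |Wacc s i j|).mulVec (offU s - offL s) := by
  intro x
  have key : ∀ n, bU n - bL n = ∑ s ∈ Finset.range n,
      (Matrix.of fun i j => |Wacc s i j|).mulVec (offU s - offL s) := by
    intro n
    induction n with
    | zero => simp [hbL0, hbU0]
    | succ n ih =>
      rw [Finset.sum_range_succ, ← ih, hbUs, hbLs]
      funext i
      simp only [Pi.sub_apply, Pi.add_apply, Matrix.mulVec, dotProduct,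
        Matrix.of_apply, Finset.sum_sub_distrib]
      have h : ∀ j : Fin d, |Wacc n i j| * (offU n j - offL n j)
          = (Wacc n i j ⊔ 0) * offU n j + (Wacc n i j ⊓ 0) * offL n j
            - ((Wacc n i j ⊓ 0) * offU n j + (Wacc n i j ⊔ 0) * offL n j) := by
        intro j
        rcases le_total (Wacc n i j) 0 with hle | hle
        · rw [max_eq_right hle, min_eq_left hle, abs_of_nonpos hle]; ring
        · rw [max_eq_left hle, min_eq_right hle, abs_of_nonneg hle]; ring
      rw [Finset.sum_congr rfl fun j _ => h j, Finset.sum_sub_distrib,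
        Finset.sum_add_distrib, Finset.sum_add_distrib]
      ring
  have : ((Wacc k).mulVec x + bU k) - ((Wacc k).mulVec x + bL k) = bU k - bL k := by
    abel
  rw [this, key]
end

section
/- Upper bound tightness for single-hidden-layer ReLU networks: for any row vector W₁ᵢ ∈ ℝ^d and any hyper-rectangle {x : α⁰ ≼ x ≼ β⁰}, letting α̂ᵢ = min_x W₁ᵢ·x and β̂ᵢ = max_x W₁ᵢ·x over the hyper-rectangle, and defining the parallelogram upper relaxation Dᵢᵢ·W₁ᵢ·x + (b_U)ᵢ via the ReLU relaxation rule (Dᵢᵢ = 1, b_U = 0 if α̂ᵢ ≥ 0; Dᵢᵢ = 0, b_U = 0 if β̂ᵢ ≤ 0; Dᵢᵢ = β̂ᵢ/(β̂ᵢ−α̂ᵢ), (b_U)ᵢ = −α̂ᵢβ̂ᵢ/(β̂ᵢ−α̂ᵢ) otherwise), the maximum of the upper relaxation over the hyper-rectangle equals the maximum of ReLU(W₁ᵢ·x) = max(W₁ᵢ·x, 0) over the hyper-rectangle. -/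
/-- Upper-bound tightness for single-hidden-layer ReLU networks: the
maximum of the parallelogram upper relaxation over the hyper-rectangle equals the
maximum of `ReLU(W·x)` over the hyper-rectangle. -/
theorem stmt8 (d : ℕ) (W : Fin d → ℝ) (α β : Fin d → ℝ) (hαβ : ∀ j, α j ≤ β j)
    (ahat bhat : ℝ)
    (ha : IsLeast {y : ℝ | ∃ x : Fin d → ℝ, (∀ j, α j ≤ x j ∧ x j ≤ β j) ∧
        y = ∑ j, W j * x j} ahat)
    (hb : IsGreatest {y : ℝ | ∃ x : Fin d → ℝ, (∀ j, α j ≤ x j ∧ x j ≤ β j) ∧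
        y = ∑ j, W j * x j} bhat) :
    sSup {y : ℝ | ∃ x : Fin d → ℝ, (∀ j, α j ≤ x j ∧ x j ≤ β j) ∧
        y = (if 0 ≤ ahat then (1:ℝ) else if bhat ≤ 0 then 0 else bhat / (bhat - ahat))
              * (∑ j, W j * x j)
            + (if 0 ≤ ahat then (0:ℝ) else if bhat ≤ 0 then 0
                else -(ahat * bhat) / (bhat - ahat))}
      = sSup {y : ℝ | ∃ x : Fin d → ℝ, (∀ j, α j ≤ x j ∧ x j ≤ β j) ∧
          y = max (∑ j, W j * x j) 0} := by
  have hab : ahat ≤ bhat := hb.2 ha.1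
  obtain ⟨xb, hxb, hxbeq⟩ := hb.1
  set c := (if 0 ≤ ahat then (1:ℝ) else if bhat ≤ 0 then 0 else bhat / (bhat - ahat)) with hc
  set e := (if 0 ≤ ahat then (0:ℝ) else if bhat ≤ 0 then 0
      else -(ahat * bhat) / (bhat - ahat)) with he
  have key : c * bhat + e = max bhat 0 := by
    by_cases h1 : 0 ≤ ahat
    · simp [hc, he, h1, max_eq_left (le_trans h1 hab)]
    · by_cases h2 : bhat ≤ 0
      · simp [hc, he, h1, h2, max_eq_right h2]
      · have hb0 : 0 < bhat := lt_of_not_ge h2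
        have ha0 : ahat < 0 := lt_of_not_ge h1
        have hne : bhat - ahat ≠ 0 := by linarith
        simp only [hc, he, if_neg h1, if_neg h2]
        rw [max_eq_left hb0.le]
        field_simp
        ring
  have hc0 : 0 ≤ c := by
    by_cases h1 : 0 ≤ ahat
    · simp [hc, h1]
    · by_cases h2 : bhat ≤ 0
      · simp [hc, h1, h2]
      · have hb0 : 0 < bhat := lt_of_not_ge h2
        have ha0 : ahat < 0 := lt_of_not_ge h1
        simp only [hc, if_neg h1, if_neg h2]
        have : (0:ℝ) < bhat - ahat := by linarith
        exact div_nonneg hb0.le this.le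
  have hL : IsGreatest {y : ℝ | ∃ x : Fin d → ℝ, (∀ j, α j ≤ x j ∧ x j ≤ β j) ∧
      y = c * (∑ j, W j * x j) + e} (max bhat 0) := by
    constructor
    · exact ⟨xb, hxb, by rw [← hxbeq, key]⟩
    · rintro y ⟨x, hx, rfl⟩
      have hsb : (∑ j, W j * x j) ≤ bhat := hb.2 ⟨x, hx, rfl⟩
      calc c * (∑ j, W j * x j) + e ≤ c * bhat + e := by nlinarith
        _ = max bhat 0 := key
  have hR : IsGreatest {y : ℝ | ∃ x : Fin d → ℝ, (∀ j, α j ≤ x j ∧ x j ≤ β j) ∧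
      y = max (∑ j, W j * x j) 0} (max bhat 0) := by
    constructor
    · exact ⟨xb, hxb, by rw [hxbeq]⟩
    · rintro y ⟨x, hx, rfl⟩
      exact max_le_max (hb.2 ⟨x, hx, rfl⟩) le_rfl
  rw [hL.csSup_eq, hR.csSup_eq]
end

section
/- If a case in the ReLU relaxation is 'crossing' (α̂ < 0 < β̂ where α̂ = W·x₀ − ε‖W‖₁ and β̂ = W·x₀ + ε‖W‖₁), then the relaxed minimum over the ℓ∞-ball of radius ε around x₀ satisfies min_{‖x−x₀‖∞≤ε} (β̂/(β̂−α̂))·W·x = (β̂·α̂)/(β̂−α̂) = ((W·x₀)² − ε²‖W‖₁²)/(2ε‖W‖₁), which is ≤ 0. -/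
/-- In the crossing case `α̂ < 0 < β̂` (with `α̂ = W·x₀ − ε‖W‖₁`,
`β̂ = W·x₀ + ε‖W‖₁`), the relaxed minimum over the ℓ∞-ball equals
`β̂α̂/(β̂−α̂) = ((W·x₀)² − ε²‖W‖₁²)/(2ε‖W‖₁) ≤ 0`. -/
theorem stmt9 (d : ℕ) (W : Fin d → ℝ) (hW : W ≠ 0) (x₀ : Fin d → ℝ)
    (ε : ℝ) (hε : 0 < ε) (ahat bhat : ℝ)
    (hah : ahat = (∑ j, W j * x₀ j) - ε * ∑ j, |W j|)
    (hbh : bhat = (∑ j, W j * x₀ j) + ε * ∑ j, |W j|)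
    (hcross : ahat < 0 ∧ 0 < bhat) :
    sInf {y : ℝ | ∃ x : Fin d → ℝ, (∀ j, |x j - x₀ j| ≤ ε) ∧
          y = (bhat / (bhat - ahat)) * ∑ j, W j * x j}
        = bhat * ahat / (bhat - ahat)
    ∧ bhat * ahat / (bhat - ahat)
        = ((∑ j, W j * x₀ j) ^ 2 - ε ^ 2 * (∑ j, |W j|) ^ 2) / (2 * ε * ∑ j, |W j|)
    ∧ bhat * ahat / (bhat - ahat) ≤ 0 := by
  obtain ⟨ha, hb⟩ := hcross
  have hS : 0 < ∑ j, |W j| := by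
    obtain ⟨i, hi⟩ := Function.ne_iff.mp hW
    exact Finset.sum_pos' (fun j _ => abs_nonneg _)
      ⟨i, Finset.mem_univ i, abs_pos.mpr hi⟩
  have hba : 0 < bhat - ahat := by rw [hah, hbh]; nlinarith
  have hc : 0 ≤ bhat / (bhat - ahat) := div_nonneg hb.le hba.le
  set x₁ : Fin d → ℝ := fun j => x₀ j - ε * (if 0 ≤ W j then 1 else -1) with hx₁
  have hmem : ∀ j, |x₁ j - x₀ j| ≤ ε := by
    intro j
    simp only [hx₁, sub_sub_cancel_left, abs_neg, abs_mul]
    split_ifs <;> simp [abs_of_pos hε, le_of_lt hε]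
  have hval : ∑ j, W j * x₁ j = ahat := by
    rw [hah, Finset.mul_sum, ← Finset.sum_sub_distrib]
    apply Finset.sum_congr rfl
    intro j _
    rcases le_or_gt 0 (W j) with h | h
    · simp only [hx₁, abs_of_nonneg h, if_pos h]; ring
    · simp only [hx₁, abs_of_neg h, if_neg (not_le.mpr h)]; ring
  have hlb : ∀ x : Fin d → ℝ, (∀ j, |x j - x₀ j| ≤ ε) → ahat ≤ ∑ j, W j * x j := by
    intro x hx
    rw [hah, Finset.mul_sum, ← Finset.sum_sub_distrib]
    apply Finset.sum_le_sum
    intro j _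
    have h1 : |W j * (x j - x₀ j)| ≤ |W j| * ε := by
      rw [abs_mul]
      exact mul_le_mul_of_nonneg_left (hx j) (abs_nonneg _)
    have := neg_abs_le (W j * (x j - x₀ j))
    nlinarith
  have hkey : ∀ x : Fin d → ℝ, (∀ j, |x j - x₀ j| ≤ ε) →
      bhat * ahat / (bhat - ahat) ≤ (bhat / (bhat - ahat)) * ∑ j, W j * x j := by
    intro x hx
    calc bhat * ahat / (bhat - ahat) = (bhat / (bhat - ahat)) * ahat := by ring
    _ ≤ _ := mul_le_mul_of_nonneg_left (hlb x hx) hc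
  have hinf : sInf {y : ℝ | ∃ x : Fin d → ℝ, (∀ j, |x j - x₀ j| ≤ ε) ∧
      y = (bhat / (bhat - ahat)) * ∑ j, W j * x j} = bhat * ahat / (bhat - ahat) := by
    apply le_antisymm
    · have hbdd : BddBelow {y : ℝ | ∃ x : Fin d → ℝ, (∀ j, |x j - x₀ j| ≤ ε) ∧
          y = (bhat / (bhat - ahat)) * ∑ j, W j * x j} := by
        refine ⟨bhat * ahat / (bhat - ahat), ?_⟩
        rintro y ⟨x, hx, rfl⟩
        exact hkey x hx
      have hmem' : bhat * ahat / (bhat - ahat) ∈ {y : ℝ | ∃ x : Fin d → ℝ,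
          (∀ j, |x j - x₀ j| ≤ ε) ∧ y = (bhat / (bhat - ahat)) * ∑ j, W j * x j} :=
        ⟨x₁, hmem, by rw [hval]; ring⟩
      exact csInf_le hbdd hmem'
    · have hne : {y : ℝ | ∃ x : Fin d → ℝ, (∀ j, |x j - x₀ j| ≤ ε) ∧
          y = (bhat / (bhat - ahat)) * ∑ j, W j * x j}.Nonempty :=
        ⟨(bhat / (bhat - ahat)) * ∑ j, W j * x₁ j, x₁, hmem, rfl⟩
      apply le_csInf hne
      rintro y ⟨x, hx, rfl⟩
      exact hkey x hx
  refine ⟨hinf, ?_, ?_⟩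
  · rw [hah, hbh]
    have h2 : (2 : ℝ) * ε * ∑ j, |W j| ≠ 0 := by positivity
    field_simp
    ring
  · exact div_nonpos_of_nonpos_of_nonneg (by nlinarith) hba.le
end

section
/- Tightness on nonnegative sub-networks: for an m-layer ReLU network with entrywise nonnegative weights and zero biases, for any 2 ≤ ℓ ≤ m and 1 ≤ k ≤ ℓ−2, the parallelogram-relaxation lower bound is exact: min over the hyper-rectangle {α^{ℓ−k−1} ≼ x ≼ β^{ℓ−k−1}} of T_L^{ℓ−k:ℓ}(x)ᵢ equals min over the same set of f̃ᵢ^{ℓ−k:ℓ}(x), for every coordinate i. -/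
open Matrix

/-- Entrywise positive part of a matrix. -/
noncomputable def posM {d : ℕ} (M : Matrix (Fin d) (Fin d) ℝ) : Matrix (Fin d) (Fin d) ℝ :=
  Matrix.of fun i j => max (M i j) 0

/-- Entrywise negative part of a matrix. -/
noncomputable def negM {d : ℕ} (M : Matrix (Fin d) (Fin d) ℝ) : Matrix (Fin d) (Fin d) ℝ :=
  Matrix.of fun i j => min (M i j) 0

/-- Componentwise ReLU. -/
noncomputable def reluV {d : ℕ} (v : Fin d → ℝ) : Fin d → ℝ := fun i => max (v i) 0

/-- Exact lower bound of `W x` over the hyper-rectangle `[a, b]`. -/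
noncomputable def preLo {d : ℕ} (W : Matrix (Fin d) (Fin d) ℝ) (a b : Fin d → ℝ) :
    Fin d → ℝ :=
  W.mulVec b + (posM W).mulVec (a - b)

/-- Exact upper bound of `W x` over the hyper-rectangle `[a, b]`. -/
noncomputable def preHi {d : ℕ} (W : Matrix (Fin d) (Fin d) ℝ) (a b : Fin d → ℝ) :
    Fin d → ℝ :=
  W.mulVec b + (posM (-W)).mulVec (b - a)

/-- IBP pre-activation bound pair at layer `s` of the bias-free network with
weights `V`, from the input hyper-rectangle `[a, b]`. -/
noncomputable def ibpPre {d : ℕ} (V : ℕ → Matrix (Fin d) (Fin d) ℝ) (a b : Fin d → ℝ) :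
    ℕ → (Fin d → ℝ) × (Fin d → ℝ)
  | 0 => (preLo (V 0) a b, preHi (V 0) a b)
  | s + 1 =>
      (preLo (V (s + 1)) (reluV (ibpPre V a b s).1) (reluV (ibpPre V a b s).2),
       preHi (V (s + 1)) (reluV (ibpPre V a b s).1) (reluV (ibpPre V a b s).2))

/-- ReLU parallelogram relaxation slope from scalar pre-activation bounds. -/
noncomputable def Dslope (x y : ℝ) : ℝ :=
  if 0 ≤ x then 1 else if y ≤ 0 then 0 else y / (y - x)

/-- ReLU parallelogram relaxation upper offset from scalar pre-activation bounds. -/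
noncomputable def offUp (x y : ℝ) : ℝ :=
  if 0 ≤ x then 0 else if y ≤ 0 then 0 else -(x * y) / (y - x)

/-- The diagonal slope matrix of the ReLU relaxation at layer `s`. -/
noncomputable def Dmat {d : ℕ} (V : ℕ → Matrix (Fin d) (Fin d) ℝ) (a b : Fin d → ℝ)
    (s : ℕ) : Matrix (Fin d) (Fin d) ℝ :=
  Matrix.diagonal fun i => Dslope ((ibpPre V a b s).1 i) ((ibpPre V a b s).2 i)

/-- The upper offset vector of the ReLU relaxation at layer `s` (lower offset is `0`). -/
noncomputable def offU {d : ℕ} (V : ℕ → Matrix (Fin d) (Fin d) ℝ) (a b : Fin d → ℝ)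
    (s : ℕ) : Fin d → ℝ :=
  fun i => offUp ((ibpPre V a b s).1 i) ((ibpPre V a b s).2 i)

/-- Accumulated slope matrix `W_L^{(kend−t):kend}` of the multi-layer linear lower
approximation of the sub-network ending (linearly) at layer `kend`. -/
noncomputable def Wacc {d : ℕ} (V : ℕ → Matrix (Fin d) (Fin d) ℝ) (a b : Fin d → ℝ)
    (kend : ℕ) : ℕ → Matrix (Fin d) (Fin d) ℝ
  | 0 => V kend
  | t + 1 => (Wacc V a b kend t * Dmat V a b (kend - (t + 1))) * V (kend - (t + 1))

/-- Accumulated bias `b_L^{(kend−t):kend}` of the multi-layer linear lower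
approximation (the network biases and the ReLU lower offsets are `0`). -/
noncomputable def bacc {d : ℕ} (V : ℕ → Matrix (Fin d) (Fin d) ℝ) (a b : Fin d → ℝ)
    (kend : ℕ) : ℕ → Fin d → ℝ
  | 0 => 0
  | t + 1 => (Wacc V a b kend t * Dmat V a b (kend - (t + 1))).mulVec 0
      + (negM (Wacc V a b kend t)).mulVec (offU V a b (kend - (t + 1)))
      + (posM (Wacc V a b kend t)).mulVec 0
      + bacc V a b kend t

/-- Forward ReLU network: composition of layers `0..s` with ReLU activations. -/
noncomputable def fwd {d : ℕ} (V : ℕ → Matrix (Fin d) (Fin d) ℝ) :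
    ℕ → (Fin d → ℝ) → (Fin d → ℝ)
  | 0 => fun x => reluV ((V 0).mulVec x)
  | s + 1 => fun x => reluV ((V (s + 1)).mulVec (fwd V s x))

/-- Sub-network of layers `0..k` with the last ReLU dropped. -/
noncomputable def ftil {d : ℕ} (V : ℕ → Matrix (Fin d) (Fin d) ℝ) (k : ℕ)
    (x : Fin d → ℝ) : Fin d → ℝ :=
  (V k).mulVec (fwd V (k - 1) x)

section Aux

variable {d : ℕ}

lemma posM_of_nonneg (M : Matrix (Fin d) (Fin d) ℝ) (h : ∀ i j, 0 ≤ M i j) :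
    posM M = M := by
  ext i j; exact max_eq_left (h i j)

lemma mulVec_nonneg (M : Matrix (Fin d) (Fin d) ℝ) (x : Fin d → ℝ)
    (hM : ∀ i j, 0 ≤ M i j) (hx : ∀ j, 0 ≤ x j) : ∀ i, 0 ≤ M.mulVec x i := by
  intro i
  show 0 ≤ ∑ j, M i j * x j
  exact Finset.sum_nonneg fun j _ => mul_nonneg (hM i j) (hx j)

lemma preLo_eq (W : Matrix (Fin d) (Fin d) ℝ) (hW : ∀ i j, 0 ≤ W i j)
    (a b : Fin d → ℝ) : preLo W a b = W.mulVec a := by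
  unfold preLo
  rw [posM_of_nonneg W hW, ← Matrix.mulVec_add]
  congr 1
  funext j; simp

lemma reluV_nonneg (v : Fin d → ℝ) : ∀ i, 0 ≤ reluV v i := fun i => le_max_right _ _

lemma reluV_of_nonneg (v : Fin d → ℝ) (h : ∀ i, 0 ≤ v i) : reluV v = v := by
  funext i; exact max_eq_left (h i)

lemma ibpPre_fst_nonneg (V : ℕ → Matrix (Fin d) (Fin d) ℝ)
    (hV : ∀ s i j, 0 ≤ V s i j) (a b : Fin d → ℝ) (ha : ∀ i, 0 ≤ a i) :
    ∀ s i, 0 ≤ (ibpPre V a b s).1 i := by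
  intro s i
  cases s with
  | zero =>
      show 0 ≤ preLo (V 0) a b i
      rw [preLo_eq _ (hV 0)]
      exact mulVec_nonneg _ _ (hV 0) ha i
  | succ s =>
      show 0 ≤ preLo (V (s+1)) (reluV (ibpPre V a b s).1) (reluV (ibpPre V a b s).2) i
      rw [preLo_eq _ (hV (s+1))]
      exact mulVec_nonneg _ _ (hV (s+1)) (reluV_nonneg _) i

lemma Dmat_eq_one (V : ℕ → Matrix (Fin d) (Fin d) ℝ)
    (hV : ∀ s i j, 0 ≤ V s i j) (a b : Fin d → ℝ) (ha : ∀ i, 0 ≤ a i) (s : ℕ) :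
    Dmat V a b s = 1 := by
  unfold Dmat
  rw [show (fun i => Dslope ((ibpPre V a b s).1 i) ((ibpPre V a b s).2 i)) = fun _ => (1:ℝ)
    from funext fun i => by
      unfold Dslope; rw [if_pos (ibpPre_fst_nonneg V hV a b ha s i)]]
  exact Matrix.diagonal_one

lemma offU_eq_zero (V : ℕ → Matrix (Fin d) (Fin d) ℝ)
    (hV : ∀ s i j, 0 ≤ V s i j) (a b : Fin d → ℝ) (ha : ∀ i, 0 ≤ a i) (s : ℕ) :
    offU V a b s = 0 := by
  funext i
  show offUp _ _ = 0
  unfold offUp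
  rw [if_pos (ibpPre_fst_nonneg V hV a b ha s i)]

lemma bacc_eq_zero (V : ℕ → Matrix (Fin d) (Fin d) ℝ)
    (hV : ∀ s i j, 0 ≤ V s i j) (a b : Fin d → ℝ) (ha : ∀ i, 0 ≤ a i)
    (kend : ℕ) : ∀ t, bacc V a b kend t = 0 := by
  intro t
  induction t with
  | zero => rfl
  | succ t ih =>
      show (Wacc V a b kend t * Dmat V a b (kend - (t + 1))).mulVec 0
        + (negM (Wacc V a b kend t)).mulVec (offU V a b (kend - (t + 1)))
        + (posM (Wacc V a b kend t)).mulVec 0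
        + bacc V a b kend t = 0
      rw [ih, offU_eq_zero V hV a b ha]
      simp [Matrix.mulVec_zero]

lemma Wacc_succ (V : ℕ → Matrix (Fin d) (Fin d) ℝ)
    (hV : ∀ s i j, 0 ≤ V s i j) (a b : Fin d → ℝ) (ha : ∀ i, 0 ≤ a i)
    (kend t : ℕ) :
    Wacc V a b kend (t + 1) = Wacc V a b kend t * V (kend - (t + 1)) := by
  show (Wacc V a b kend t * Dmat V a b (kend - (t + 1))) * V (kend - (t + 1)) = _
  rw [Dmat_eq_one V hV a b ha, mul_one]

/-- Product of layers `0..s`. -/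
noncomputable def Pprod (V : ℕ → Matrix (Fin d) (Fin d) ℝ) :
    ℕ → Matrix (Fin d) (Fin d) ℝ
  | 0 => V 0
  | s + 1 => V (s + 1) * Pprod V s

lemma Pprod_nonneg (V : ℕ → Matrix (Fin d) (Fin d) ℝ)
    (hV : ∀ s i j, 0 ≤ V s i j) : ∀ s i j, 0 ≤ Pprod V s i j := by
  intro s
  induction s with
  | zero => exact hV 0
  | succ s ih =>
      intro i j
      show 0 ≤ (V (s+1) * Pprod V s) i j
      rw [Matrix.mul_apply]
      exact Finset.sum_nonneg fun l _ => mul_nonneg (hV (s+1) i l) (ih l j)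

lemma fwd_eq (V : ℕ → Matrix (Fin d) (Fin d) ℝ)
    (hV : ∀ s i j, 0 ≤ V s i j) (x : Fin d → ℝ) (hx : ∀ j, 0 ≤ x j) :
    ∀ s, fwd V s x = (Pprod V s).mulVec x := by
  intro s
  induction s with
  | zero =>
      show reluV ((V 0).mulVec x) = _
      exact reluV_of_nonneg _ (mulVec_nonneg _ _ (hV 0) hx)
  | succ s ih =>
      show reluV ((V (s+1)).mulVec (fwd V s x)) = _
      rw [ih, Matrix.mulVec_mulVec]
      exact reluV_of_nonneg _ (mulVec_nonneg _ _ (Pprod_nonneg V hV (s+1)) hx)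

lemma fwd_nonneg (V : ℕ → Matrix (Fin d) (Fin d) ℝ) (x : Fin d → ℝ) (s : ℕ) :
    ∀ i, 0 ≤ fwd V s x i := by
  cases s with
  | zero => exact reluV_nonneg _
  | succ s => exact reluV_nonneg _

lemma Wacc_eq (V : ℕ → Matrix (Fin d) (Fin d) ℝ)
    (hV : ∀ s i j, 0 ≤ V s i j) (a b : Fin d → ℝ) (ha : ∀ i, 0 ≤ a i)
    (k : ℕ) (hk : 1 ≤ k) :
    Wacc V a b k k = V k * Pprod V (k - 1) := by
  have key : ∀ t, t ≤ k - 1 →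
      Wacc V a b k t * Pprod V (k - 1 - t) = V k * Pprod V (k - 1) := by
    intro t
    induction t with
    | zero => intro _; rfl
    | succ t ih =>
        intro ht
        rw [Wacc_succ V hV a b ha]
        have h1 : k - (t + 1) = (k - 1 - (t + 1)) + 1 := by omega
        have h2 : k - 1 - t = (k - 1 - (t + 1)) + 1 := by omega
        rw [mul_assoc, h1]
        have : V (k - 1 - (t + 1) + 1) * Pprod V (k - 1 - (t + 1))
            = Pprod V (k - 1 - t) := by rw [h2]; rfl
        rw [this]
        exact ih (by omega)
  have hkk : k = (k - 1) + 1 := by omega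
  have h0 : k - (k - 1 + 1) = 0 := by omega
  calc Wacc V a b k k = Wacc V a b k ((k - 1) + 1) := by rw [← hkk]
    _ = Wacc V a b k (k - 1) * V 0 := by rw [Wacc_succ V hV a b ha, h0]
    _ = Wacc V a b k (k - 1) * Pprod V (k - 1 - (k - 1)) := by
        rw [Nat.sub_self]; rfl
    _ = V k * Pprod V (k - 1) := key (k - 1) le_rfl

end Aux

/-- Tightness on nonnegative sub-networks: for a bias-free ReLU
network with entrywise nonnegative weights, a sub-network whose input
hyper-rectangle is nonnegative (as IBP bounds after the first layer are), the
parallelogram-relaxation lower bound is exact in every coordinate. -/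
theorem stmt13 (d k : ℕ) (hd : 0 < d) (hk : 1 ≤ k)
    (V : ℕ → Matrix (Fin d) (Fin d) ℝ) (hV : ∀ s i j, 0 ≤ V s i j)
    (α β : Fin d → ℝ) (hα : ∀ i, 0 ≤ α i) (hαβ : ∀ i, α i ≤ β i) :
    ∀ i, sInf {y : ℝ | ∃ x : Fin d → ℝ, (∀ j, α j ≤ x j ∧ x j ≤ β j) ∧
          y = ((Wacc V α β k k).mulVec x + bacc V α β k k) i}
      = sInf {y : ℝ | ∃ x : Fin d → ℝ, (∀ j, α j ≤ x j ∧ x j ≤ β j) ∧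
          y = ftil V k x i} := by
  intro i
  have hset : {y : ℝ | ∃ x : Fin d → ℝ, (∀ j, α j ≤ x j ∧ x j ≤ β j) ∧
        y = ((Wacc V α β k k).mulVec x + bacc V α β k k) i}
      = {y : ℝ | ∃ x : Fin d → ℝ, (∀ j, α j ≤ x j ∧ x j ≤ β j) ∧
        y = ftil V k x i} := by
    have hmain : ∀ x : Fin d → ℝ, (∀ j, α j ≤ x j ∧ x j ≤ β j) →
        ((Wacc V α β k k).mulVec x + bacc V α β k k) i = ftil V k x i := by
      intro x hx
      have hx0 : ∀ j, 0 ≤ x j := fun j => le_trans (hα j) (hx j).1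
      rw [bacc_eq_zero V hV α β hα, Wacc_eq V hV α β hα k hk]
      show ((V k * Pprod V (k-1)).mulVec x + 0) i = ftil V k x i
      rw [add_zero]
      unfold ftil
      rw [fwd_eq V hV x hx0, Matrix.mulVec_mulVec]
    ext y
    constructor
    · rintro ⟨x, hx, rfl⟩
      exact ⟨x, hx, (hmain x hx)⟩
    · rintro ⟨x, hx, rfl⟩
      exact ⟨x, hx, (hmain x hx).symm⟩
  rw [hset]
end
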